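/- Let α ≥ 3 be a finite number, U a set, and U_0, U_1, …, U_{α−2} pairwise disjoint nonempty subsets of U. For a function τ : α → α and X ⊆ U^α set S_τ(X) = {s ∈ U^α : s ∘ τ ∈ X}. Let p ≥ 3 and let Q_0, …, Q_{p−2} be pairwise disjoint nonempty subsets of {s ∈ U^α : s(0) ∈ U_0, s(1) ∈ U_0, and s(i) ∈ U_{i−1} for all 2 ≤ i < α}, satisfying S_{[0,1]}(Q_k) = Q_{p−2−k} for every k < p−1. Then for all permutations τ, σ of α and all k, j < p − 1: if S_τ(Q_k) = S_σ(Q_j), then either (σ = τ and j = k) or (σ = τ ∘ [0,1] and j = p − 2 − k). -/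
import Mathlib


/-- The substitution operation along a function `τ : α → α`:
`Sop τ X = {s : α → U | s ∘ τ ∈ X}`. -/
def Sop {α U : Type*} (τ : α → α) (X : Set (α → U)) : Set (α → U) :=
  {s | s ∘ τ ∈ X}

/-- Let `α ≥ 3`, `U_0, …, U_{α−2}` pairwise disjoint nonempty subsets of `U`, `p ≥ 3`, and
`Q_0, …, Q_{p−2}` pairwise disjoint nonempty subsets of
`{s : s(0) ∈ U_0, s(1) ∈ U_0, s(i) ∈ U_{i−1} (2 ≤ i < α)}` with
`S_{[0,1]}(Q_k) = Q_{p−2−k}`. If `S_τ(Q_k) = S_σ(Q_j)`, then either `σ = τ` and `j = k`, or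
`σ = τ ∘ [0,1]` and `j = p − 2 − k`. -/
theorem Sop_Q_eq_cases {U : Type*} (α p : ℕ) (hα : 3 ≤ α) (hp : 3 ≤ p)
    (Usub : ℕ → Set U)
    (hUdisj : ∀ i ≤ α - 2, ∀ j ≤ α - 2, i ≠ j → Usub i ∩ Usub j = ∅)
    (hUne : ∀ i ≤ α - 2, (Usub i).Nonempty)
    (Q : ℕ → Set (Fin α → U))
    (hQsub : ∀ k < p - 1, Q k ⊆ {s : Fin α → U |
        s ⟨0, by omega⟩ ∈ Usub 0 ∧ s ⟨1, by omega⟩ ∈ Usub 0 ∧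
        ∀ i : Fin α, 2 ≤ (i : ℕ) → s i ∈ Usub ((i : ℕ) - 1)})
    (hQdisj : ∀ k < p - 1, ∀ j < p - 1, k ≠ j → Q k ∩ Q j = ∅)
    (hQne : ∀ k < p - 1, (Q k).Nonempty)
    (hQswap : ∀ k < p - 1,
        Sop (⇑(Equiv.swap (⟨0, by omega⟩ : Fin α) ⟨1, by omega⟩)) (Q k) = Q (p - 2 - k)) :
    ∀ τ σ : Equiv.Perm (Fin α), ∀ k < p - 1, ∀ j < p - 1,
      Sop ⇑τ (Q k) = Sop ⇑σ (Q j) →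
      (σ = τ ∧ j = k) ∨
      (σ = τ * Equiv.swap (⟨0, by omega⟩ : Fin α) ⟨1, by omega⟩ ∧ j = p - 2 - k) := by
  intro τ σ k hk j hj hEq
  set z : Fin α := ⟨0, by omega⟩ with hz
  set o : Fin α := ⟨1, by omega⟩ with ho
  set π : Equiv.Perm (Fin α) := τ⁻¹ * σ with hπdef
  have hzv : (z : ℕ) = 0 := rfl
  have hov : (o : ℕ) = 1 := rfl
  -- Q k = Sop π (Q j), pointwise
  have hπ : ∀ s : Fin α → U, s ∈ Q k ↔ s ∘ ⇑π ∈ Q j := by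
    intro s
    have h1 : (s ∘ ⇑τ⁻¹) ∘ ⇑τ = s := by
      funext i; simp
    have h2 : (s ∘ ⇑τ⁻¹) ∘ ⇑σ = s ∘ ⇑π := by
      funext i; simp [hπdef]
    constructor
    · intro hs
      have : s ∘ ⇑τ⁻¹ ∈ Sop ⇑τ (Q k) := by simp only [Sop, Set.mem_setOf_eq, h1]; exact hs
      rw [hEq] at this
      simpa only [Sop, Set.mem_setOf_eq, h2] using this
    · intro hs
      have : s ∘ ⇑τ⁻¹ ∈ Sop ⇑σ (Q j) := by simp only [Sop, Set.mem_setOf_eq, h2]; exact hs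
      rw [← hEq] at this
      simpa only [Sop, Set.mem_setOf_eq, h1] using this
  obtain ⟨t, ht⟩ := hQne k hk
  obtain ⟨ht0, ht1, htA⟩ := hQsub k hk ht
  have htπ : t ∘ ⇑π ∈ Q j := (hπ t).mp ht
  obtain ⟨hp0, hp1, hpA⟩ := hQsub j hj htπ
  simp only [Function.comp_apply] at hp0 hp1 hpA
  -- general membership classification for t
  have mem : ∀ i : Fin α, t i ∈ Usub (if (i : ℕ) ≤ 1 then 0 else (i : ℕ) - 1) := by
    intro i
    by_cases h : (i : ℕ) ≤ 1
    · rw [if_pos h]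
      interval_cases hi : (i : ℕ)
      · have : i = z := Fin.ext (by omega)
        rwa [this]
      · have : i = o := Fin.ext (by omega)
        rwa [this]
    · rw [if_neg h]; exact htA i (by omega)
  have disj' : ∀ a b : ℕ, a ≤ α - 2 → b ≤ α - 2 → ∀ x : U, x ∈ Usub a → x ∈ Usub b → a = b := by
    intro a b ha hb x hxa hxb
    by_contra hne
    have := hUdisj a ha b hb hne
    exact absurd (Set.mem_inter hxa hxb) (by rw [this]; exact Set.notMem_empty x)
  have clsle : ∀ i : Fin α, (if (i : ℕ) ≤ 1 then 0 else (i : ℕ) - 1) ≤ α - 2 := by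
    intro i
    have := i.isLt
    by_cases h : (i : ℕ) ≤ 1 <;> simp [h] <;> omega
  -- π fixes indices ≥ 2
  have hfix : ∀ i : Fin α, 2 ≤ (i : ℕ) → π i = i := by
    intro i hi
    have h1 : t (π i) ∈ Usub ((i : ℕ) - 1) := hpA i hi
    have h2 := mem (π i)
    have h3 := disj' _ _ (clsle (π i)) (by have := i.isLt; omega) _ h2 h1
    have h4 := (π i).isLt
    have h5 : ¬ ((π i : ℕ) ≤ 1) := by
      by_contra h
      rw [if_pos h] at h3; omega
    rw [if_neg h5] at h3
    exact Fin.ext (by omega)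
  have hlow : ∀ i : Fin α, (i : ℕ) ≤ 1 → (π i : ℕ) ≤ 1 := by
    intro i hi
    have h1 : t (π i) ∈ Usub 0 := by
      interval_cases hi2 : (i : ℕ)
      · have : i = z := Fin.ext (by omega)
        rw [this]; exact hp0
      · have : i = o := Fin.ext (by omega)
        rw [this]; exact hp1
    have h2 := mem (π i)
    have h3 := disj' _ _ (clsle (π i)) (by omega) _ h2 h1
    by_contra h
    rw [if_neg h] at h3; omega
  -- π is 1 or swap z o
  have hzo : z ≠ o := by simp [hz, ho, Fin.ext_iff]
  by_cases hcase : π z = z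
  · -- π = 1
    have hπo : π o = o := by
      have h1 := hlow o (by omega)
      have h2 : π o ≠ z := fun h => hzo (π.injective (by rw [h, hcase]))
      have : (π o : ℕ) ≠ 0 := fun h => h2 (Fin.ext (by omega))
      exact Fin.ext (by omega)
    have hπ1 : π = 1 := by
      apply Equiv.ext; intro i
      simp only [Equiv.Perm.coe_one, id_eq]
      by_cases h : (i : ℕ) ≤ 1
      · interval_cases hi : (i : ℕ)
        · have : i = z := Fin.ext (by omega)
          rw [this]; simpa using hcase
        · have : i = o := Fin.ext (by omega)
          rw [this]; simpa using hπo
      · simpa using hfix i (by omega)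
    have hQeq : Q k = Q j := by
      ext s
      rw [hπ s, hπ1]
      simp
    have hkj : k = j := by
      by_contra hne
      obtain ⟨s, hs⟩ := hQne k hk
      have := hQdisj k hk j hj hne
      exact absurd (Set.mem_inter hs (hQeq ▸ hs)) (by rw [this]; exact Set.notMem_empty s)
    left
    constructor
    · have : τ * π = σ := by rw [hπdef]; group
      rw [← this, hπ1, mul_one]
    · omega
  · -- π = swap z o
    have h1 := hlow z (by omega)
    have hπz : π z = o := by
      have : (π z : ℕ) ≠ 0 := fun h => hcase (Fin.ext (by omega))
      exact Fin.ext (by omega)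
    have hπo : π o = z := by
      have h2 := hlow o (by omega)
      have h3 : π o ≠ o := fun h => hzo (π.injective (by rw [h, hπz]))
      have : (π o : ℕ) ≠ 1 := fun h => h3 (Fin.ext (by omega))
      exact Fin.ext (by omega)
    have hπs : π = Equiv.swap z o := by
      apply Equiv.ext; intro i
      by_cases hiz : i = z
      · rw [hiz, hπz, Equiv.swap_apply_left]
      by_cases hio : i = o
      · rw [hio, hπo, Equiv.swap_apply_right]
      · rw [Equiv.swap_apply_of_ne_of_ne hiz hio]
        have : 2 ≤ (i : ℕ) := by
          rcases Nat.lt_or_ge (i : ℕ) 2 with h | h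
          · exfalso
            interval_cases hi : (i : ℕ)
            · exact hiz (Fin.ext (by omega))
            · exact hio (Fin.ext (by omega))
          · exact h
        exact hfix i this
    -- Q k = Sop swap (Q j) = Q (p - 2 - j)
    have hQeq : Q k = Q (p - 2 - j) := by
      rw [← hQswap j hj]
      ext s
      rw [hπ s, hπs]
      rfl
    have hkj : k = p - 2 - j := by
      by_contra hne
      obtain ⟨s, hs⟩ := hQne k hk
      have := hQdisj k hk (p - 2 - j) (by omega) hne
      exact absurd (Set.mem_inter hs (hQeq ▸ hs)) (by rw [this]; exact Set.notMem_empty s)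
    right
    constructor
    · have : τ * π = σ := by rw [hπdef]; group
      rw [← this, hπs]
    · omega
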